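/- Let N ≥ 2, M > 0, fix an index i, and suppose the pattern x_i is well-separated, i.e. Δ_i ≥ 2/(β N) + β^{−1} log(2 (N − 1) N β M²). Then the Hopfield update rule maps the closed ball of radius r = 1/(β N M) centered at x_i into itself: for every ξ with ‖ξ − x_i‖ ≤ r one has ‖f(ξ) − x_i‖ ≤ r. -/

import Mathlib

open scoped BigOperators RealInnerProductSpace

/-- softmax(v)_j = exp(v_j) / Σ_k exp(v_k). -/
noncomputable def softmax {N : ℕ} (v : Fin N → ℝ) : Fin N → ℝ :=
  fun j => Real.exp (v j) / ∑ k, Real.exp (v k)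

/-- The Hopfield update rule f(ξ) = X softmax(β Xᵀ ξ) = Σ_i softmax(β ⟪x_i, ξ⟫)_i • x_i. -/
noncomputable def hopfieldUpdate {d N : ℕ} (x : Fin N → EuclideanSpace ℝ (Fin d))
    (β : ℝ) (ξ : EuclideanSpace ℝ (Fin d)) : EuclideanSpace ℝ (Fin d) :=
  ∑ i, softmax (fun j => β * ⟪x j, ξ⟫) i • x i

/-!
The softmax weight of pattern `j` is at most `exp (-(β (⟪x_i, ξ⟫ - ⟪x_j, ξ⟫)))`. For `ξ` in the
ball, Cauchy–Schwarz moves this logit gap at most `2/(βN)` away from the separation `Δ_i`, so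
well-separation makes every weight `j ≠ i` at most `1 / (2 (N - 1) N β M²)`. The update minus
`x_i` is the weighted mean of the `x_j - x_i`, each of norm at most `2M`, so its norm is at most
`(N - 1) · 2M / (2 (N - 1) N β M²) = 1/(βNM)`.
-/

open Finset

section Softmax

variable {N : ℕ}

lemma softmax_sum_eq_one [NeZero N] (v : Fin N → ℝ) : ∑ j, softmax v j = 1 := by
  have hpos : 0 < ∑ k, Real.exp (v k) :=
    sum_pos (fun _ _ => Real.exp_pos _) univ_nonempty
  simp only [softmax, ← sum_div, div_self hpos.ne']

lemma softmax_nonneg (v : Fin N → ℝ) (j : Fin N) : 0 ≤ softmax v j :=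
  div_nonneg (Real.exp_pos _).le (sum_nonneg fun _ _ => (Real.exp_pos _).le)

lemma softmax_le_exp_sub (v : Fin N → ℝ) (i j : Fin N) :
    softmax v j ≤ Real.exp (v j - v i) := by
  rw [softmax, Real.exp_sub]
  exact div_le_div_of_nonneg_left (Real.exp_pos _).le (Real.exp_pos _)
    (single_le_sum (f := fun k => Real.exp (v k)) (fun k _ => (Real.exp_pos _).le) (mem_univ i))

lemma softmax_le_inv_of_log_le_sub {v : Fin N → ℝ} {C : ℝ} (hC : 0 < C) {i j : Fin N}
    (h : Real.log C ≤ v i - v j) : softmax v j ≤ C⁻¹ :=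
  calc softmax v j ≤ Real.exp (v j - v i) := softmax_le_exp_sub v i j
    _ ≤ Real.exp (-Real.log C) := Real.exp_le_exp.mpr (by linarith)
    _ = C⁻¹ := by rw [Real.exp_neg, Real.exp_log hC]

end Softmax

lemma norm_sum_smul_sub_le {ι E : Type*} [Fintype ι] [DecidableEq ι]
    [SeminormedAddCommGroup E] [NormedSpace ℝ E] {p : ι → ℝ} (hp : ∑ j, p j = 1)
    (x : ι → E) (i : ι) :
    ‖∑ j, p j • x j - x i‖ ≤ ∑ j ∈ univ.erase i, |p j| * ‖x j - x i‖ := by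
  have hmean : ∑ j, p j • x j - x i = ∑ j ∈ univ.erase i, p j • (x j - x i) := by
    rw [sum_erase univ (f := fun j => p j • (x j - x i)) (by simp)]
    simp only [smul_sub, sum_sub_distrib, ← sum_smul, hp, one_smul]
  rw [hmean]
  refine (norm_sum_le _ _).trans (sum_le_sum fun j _ => ?_)
  rw [norm_smul, Real.norm_eq_abs]

lemma sub_le_inner_sub_inner {E : Type*} [NormedAddCommGroup E] [InnerProductSpace ℝ E]
    (x y ξ : E) : ⟪x, x⟫ - ⟪x, y⟫ - ‖x - y‖ * ‖ξ - x‖ ≤ ⟪x, ξ⟫ - ⟪y, ξ⟫ := by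
  have hsplit : ⟪x, ξ⟫ - ⟪y, ξ⟫ = ⟪x, x⟫ - ⟪x, y⟫ + ⟪x - y, ξ - x⟫ := by
    simp only [inner_sub_left, inner_sub_right, real_inner_comm y x]
    ring
  rw [hsplit]
  linarith [(abs_le.mp (abs_real_inner_le_norm (x - y) (ξ - x))).1]

theorem norm_hopfieldUpdate_sub_le {d N : ℕ} [NeZero N] (x : Fin N → EuclideanSpace ℝ (Fin d))
    (β : ℝ) (ξ : EuclideanSpace ℝ (Fin d)) (i : Fin N) {ε D : ℝ}
    (hweight : ∀ j ≠ i, softmax (fun j => β * ⟪x j, ξ⟫) j ≤ ε)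
    (hdist : ∀ j, ‖x j - x i‖ ≤ D) :
    ‖hopfieldUpdate x β ξ - x i‖ ≤ ((N : ℝ) - 1) * (ε * D) := by
  set p := softmax fun j => β * ⟪x j, ξ⟫
  have hterm : ∀ j ∈ univ.erase i, |p j| * ‖x j - x i‖ ≤ ε * D := fun j hj => by
    have hpj := hweight j (ne_of_mem_erase hj)
    rw [abs_of_nonneg (softmax_nonneg _ j)]
    exact mul_le_mul hpj (hdist j) (norm_nonneg _) ((softmax_nonneg _ j).trans hpj)
  calc ‖hopfieldUpdate x β ξ - x i‖ ≤ ∑ j ∈ univ.erase i, |p j| * ‖x j - x i‖ :=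
        norm_sum_smul_sub_le (softmax_sum_eq_one _) x i
    _ ≤ #(univ.erase i) • (ε * D) := sum_le_card_nsmul _ _ _ hterm
    _ = ((N : ℝ) - 1) * (ε * D) := by
        rw [card_erase_of_mem (mem_univ i), card_univ, Fintype.card_fin, nsmul_eq_mul,
          Nat.cast_pred (Nat.pos_of_neZero N)]

/-- For N ≥ 2, M > 0 and a well-separated pattern x_i, i.e.
Δ_i ≥ 2/(β N) + β⁻¹ log(2 (N − 1) N β M²), the update rule maps the closed ball of radius
r = 1/(β N M) centered at x_i into itself. -/
theorem wellSeparated_mapsTo_ball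
    {d N : ℕ} (hN : 2 ≤ N) (x : Fin N → EuclideanSpace ℝ (Fin d)) (β M Δ : ℝ)
    (hβ : 0 < β) (hMpos : 0 < M)
    (hM : IsGreatest (Set.range fun i => ‖x i‖) M)
    (i : Fin N)
    (hΔ : IsLeast {v : ℝ | ∃ j, j ≠ i ∧ v = ⟪x i, x i⟫ - ⟪x i, x j⟫} Δ)
    (hsep : 2 / (β * N) + β⁻¹ * Real.log (2 * ((N : ℝ) - 1) * N * β * M ^ 2) ≤ Δ) :
    ∀ ξ : EuclideanSpace ℝ (Fin d),
      ‖ξ - x i‖ ≤ 1 / (β * N * M) → ‖hopfieldUpdate x β ξ - x i‖ ≤ 1 / (β * N * M) := by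
  intro ξ hξ
  have : NeZero N := ⟨by omega⟩
  have hN1 : (0 : ℝ) < N - 1 := by
    have : (2 : ℝ) ≤ N := by exact_mod_cast hN
    linarith
  set C : ℝ := 2 * ((N : ℝ) - 1) * N * β * M ^ 2
  have hC : 0 < C :=
    mul_pos (mul_pos (mul_pos (mul_pos two_pos hN1) (by linarith)) hβ) (pow_pos hMpos 2)
  have hdist : ∀ j, ‖x j - x i‖ ≤ 2 * M := fun j =>
    (norm_sub_le_of_le (hM.2 ⟨j, rfl⟩) (hM.2 ⟨i, rfl⟩)).trans_eq (two_mul M).symm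
  have hweight : ∀ j ≠ i, softmax (fun j => β * ⟪x j, ξ⟫) j ≤ C⁻¹ := fun j hj => by
    refine softmax_le_inv_of_log_le_sub (i := i) hC ?_
    have hcs : ‖x i - x j‖ * ‖ξ - x i‖ ≤ 2 / (β * N) :=
      calc ‖x i - x j‖ * ‖ξ - x i‖ ≤ 2 * M * (1 / (β * N * M)) :=
            mul_le_mul (norm_sub_rev (x i) (x j) ▸ hdist j) hξ (norm_nonneg _) (by positivity)
        _ = 2 / (β * N) := by field_simp
    have hgap : β⁻¹ * Real.log C ≤ ⟪x i, ξ⟫ - ⟪x j, ξ⟫ := by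
      linarith [sub_le_inner_sub_inner (x i) (x j) ξ, hΔ.2 ⟨j, hj, rfl⟩]
    calc Real.log C = β * (β⁻¹ * Real.log C) := by field_simp
      _ ≤ β * ⟪x i, ξ⟫ - β * ⟪x j, ξ⟫ := by rw [← mul_sub]; gcongr
  calc ‖hopfieldUpdate x β ξ - x i‖ ≤ ((N : ℝ) - 1) * (C⁻¹ * (2 * M)) :=
        norm_hopfieldUpdate_sub_le x β ξ i hweight hdist
    _ = 1 / (β * N * M) := by field_simp; ring
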